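/- arXiv:1709.04739 — 9 statements merged into one kernel-verified Lean document; each statement's English description precedes it below -/
import Mathlib

section
/- Let δ > 0 be a real number and let 0 ≤ j ≤ n be integers. Set s = 2(δ+2)^{n-j}, the strength of vertices created at iteration j, and let N_m = (6(δ+4)^m + 3δ + 3)/(δ+3). Then the cumulative strength distribution P_cum(s) = N_j / N_n satisfies P_cum(s) = (6(δ+4)^n · (s/2)^{-ln(δ+4)/ln(δ+2)} + 3δ + 3) / (6(δ+4)^n + 3δ + 3); in particular ((δ+2)^{n-j})^{ln(δ+4)/ln(δ+2)} = (δ+4)^{n-j} (real powers). -/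
/-- Cumulative strength distribution of the weighted network follows a
power law. -/
theorem stmt2 (δ : ℝ) (hδ : 0 < δ) (j n : ℕ) (hjn : j ≤ n)
    (s : ℝ) (hs : s = 2 * (δ + 2) ^ (n - j))
    (N : ℕ → ℝ) (hN : ∀ m : ℕ, N m = (6 * (δ + 4) ^ m + 3 * δ + 3) / (δ + 3)) :
    N j / N n =
      (6 * (δ + 4) ^ n * (s / 2) ^ (-(Real.log (δ + 4) / Real.log (δ + 2))) + 3 * δ + 3) /
        (6 * (δ + 4) ^ n + 3 * δ + 3) ∧
    (((δ + 2) ^ (n - j) : ℝ)) ^ (Real.log (δ + 4) / Real.log (δ + 2)) = (δ + 4) ^ (n - j) := by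
  set k := n - j with hk
  have h2 : (0:ℝ) < δ + 2 := by linarith
  have h4 : (0:ℝ) < δ + 4 := by linarith
  have hlog2 : Real.log (δ + 2) ≠ 0 := by
    have : (1:ℝ) < δ + 2 := by linarith
    exact ne_of_gt (Real.log_pos this)
  have key : (((δ + 2) ^ k : ℝ)) ^ (Real.log (δ + 4) / Real.log (δ + 2)) = (δ + 4) ^ k := by
    rw [← Real.rpow_natCast (δ + 2) k, ← Real.rpow_mul h2.le,
      Real.rpow_def_of_pos h2, ← Real.rpow_natCast (δ + 4) k,
      Real.rpow_def_of_pos h4]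
    congr 1
    field_simp
  refine ⟨?_, key⟩
  have hs2 : s / 2 = (δ + 2) ^ k := by rw [hs]; ring
  have hneg : (s / 2) ^ (-(Real.log (δ + 4) / Real.log (δ + 2))) = ((δ + 4 : ℝ) ^ k)⁻¹ := by
    rw [hs2, Real.rpow_neg (by positivity), key]
  rw [hneg, hN, hN]
  have hjk : j = n - k := by omega
  have hsplit : (δ + 4) ^ n = (δ + 4) ^ j * (δ + 4) ^ k := by
    rw [← pow_add]; congr 1; omega
  have h3 : (δ + 3) ≠ 0 := by linarith
  have hk4 : ((δ + 4:ℝ)) ^ k ≠ 0 := by positivity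
  have hden : 6 * (δ + 4) ^ n + 3 * δ + 3 ≠ 0 := by positivity
  rw [hsplit]
  field_simp
end

section
/- Let δ > 0 be a real number and let 0 ≤ j ≤ n be integers. Set k = (2(δ+2)^{n-j} + 2δ)/(δ+1), the degree of vertices created at iteration j, and let N_m = (6(δ+4)^m + 3δ + 3)/(δ+3). Then the cumulative degree distribution P_cum(k) = N_j / N_n satisfies P_cum(k) = (6(δ+4)^n · ((δ+1)k/2 − δ)^{-ln(δ+4)/ln(δ+2)} + 3δ + 3) / (6(δ+4)^n + 3δ + 3). -/
/-!
A vertex born at iteration `j` has degree `k` with `(δ + 1) k / 2 - δ = (δ + 2)^(n - j)`.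
Raising this to the power `-log (δ + 4) / log (δ + 2)` changes the base `δ + 2` into `δ + 4`,
giving `(δ + 4)^(j - n)`, so `6 (δ + 4)^n` times it is `6 (δ + 4)^j`, the leading term of `N j`.
-/

namespace Real

theorem pow_rpow_log_div_log {a b : ℝ} (ha : 0 < a) (ha₁ : a ≠ 1) (hb : 0 < b) (m : ℕ) :
    (a ^ m) ^ (log b / log a) = b ^ m := by
  rw [← logb, ← rpow_natCast, ← rpow_mul ha.le, mul_comm, rpow_mul ha.le, rpow_logb ha ha₁ hb,
    rpow_natCast]

end Real

theorem weighted_network_degree_sub (δ t : ℝ) (hδ : δ + 1 ≠ 0) :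
    (δ + 1) * ((2 * t + 2 * δ) / (δ + 1)) / 2 - δ = t := by
  field_simp
  ring

theorem pow_mul_inv_pow_sub {c : ℝ} (hc : c ≠ 0) {j n : ℕ} (hjn : j ≤ n) :
    c ^ n * (c ^ (n - j))⁻¹ = c ^ j := by
  rw [pow_sub₀ c hc hjn]
  field_simp

/-- Cumulative degree distribution of the weighted network follows a power law. -/
theorem stmt4 (δ : ℝ) (hδ : 0 < δ) (j n : ℕ) (hjn : j ≤ n)
    (k : ℝ) (hk : k = (2 * (δ + 2) ^ (n - j) + 2 * δ) / (δ + 1))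
    (N : ℕ → ℝ) (hN : ∀ m : ℕ, N m = (6 * (δ + 4) ^ m + 3 * δ + 3) / (δ + 3)) :
    N j / N n =
      (6 * (δ + 4) ^ n * ((δ + 1) * k / 2 - δ) ^ (-(Real.log (δ + 4) / Real.log (δ + 2))) +
          3 * δ + 3) /
        (6 * (δ + 4) ^ n + 3 * δ + 3) := by
  have hbase : (δ + 1) * k / 2 - δ = (δ + 2) ^ (n - j) := by
    rw [hk]
    exact weighted_network_degree_sub δ _ (by positivity)
  have hpower : ((δ + 1) * k / 2 - δ) ^ (-(Real.log (δ + 4) / Real.log (δ + 2)))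
      = ((δ + 4) ^ (n - j))⁻¹ := by
    rw [hbase, Real.rpow_neg (by positivity),
      Real.pow_rpow_log_div_log (by positivity) (by linarith) (by positivity)]
  rw [hpower, mul_assoc, pow_mul_inv_pow_sub (by positivity) hjn, hN, hN,
    div_div_div_cancel_right₀ (by positivity)]
end

section
/- Let δ > 0 be a real number and let 0 ≤ j ≤ n be integers. Define w(j,n) by w(j,j) = 1 and w(j,n) = (1+δ)·w(j,n-1) for n > j; then w(j,n) = (1+δ)^{n-j}. Moreover, with E_m = (9(δ+4)^m + 3δ)/(δ+3) and w = (1+δ)^{n-j}, the cumulative weight distribution P_cum(w) = E_j / E_n satisfies P_cum(w) = (9(δ+4)^n · w^{-ln(δ+4)/ln(δ+1)} + 3δ) / (9(δ+4)^n + 3δ). -/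
/-- Edge weights and the cumulative weight distribution of the weighted network. -/
theorem stmt5 (δ : ℝ) (hδ : 0 < δ) (j n : ℕ) (hjn : j ≤ n)
    (w : ℕ → ℝ) (hw0 : w j = 1)
    (hw : ∀ m : ℕ, m > j → w m = (1 + δ) * w (m - 1))
    (E : ℕ → ℝ) (hE : ∀ m : ℕ, E m = (9 * (δ + 4) ^ m + 3 * δ) / (δ + 3)) :
    w n = (1 + δ) ^ (n - j) ∧
    E j / E n =
      (9 * (δ + 4) ^ n *
          (((1 + δ) ^ (n - j) : ℝ)) ^ (-(Real.log (δ + 4) / Real.log (δ + 1))) + 3 * δ) /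
        (9 * (δ + 4) ^ n + 3 * δ) := by
  have hδ1 : (0:ℝ) < 1 + δ := by linarith
  have hδ4 : (0:ℝ) < δ + 4 := by linarith
  have h1 : ∀ m, j ≤ m → w m = (1 + δ) ^ (m - j) := by
    intro m hm
    induction m, hm using Nat.le_induction with
    | base => simpa using hw0
    | succ m hm ih =>
      rw [hw (m + 1) (by omega)]
      simp only [Nat.add_sub_cancel]
      rw [ih, show m + 1 - j = (m - j) + 1 by omega]
      ring
  refine ⟨h1 n hjn, ?_⟩
  have hlog1 : Real.log (δ + 1) ≠ 0 := ne_of_gt (Real.log_pos (by linarith))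
  have key : (((1 + δ) ^ (n - j) : ℝ)) ^ (-(Real.log (δ + 4) / Real.log (δ + 1)))
      = (δ + 4) ^ (-(((n - j : ℕ)) : ℝ)) := by
    rw [← Real.rpow_natCast (1 + δ) (n - j), ← Real.rpow_mul hδ1.le,
      Real.rpow_def_of_pos hδ1, Real.rpow_def_of_pos hδ4]
    congr 1
    have h : Real.log (1 + δ) = Real.log (δ + 1) := by ring_nf
    rw [h]
    field_simp
  have hpow : (9 : ℝ) * (δ + 4) ^ n * (δ + 4) ^ (-(((n - j : ℕ)) : ℝ))
      = 9 * (δ + 4) ^ j := by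
    rw [mul_assoc, ← Real.rpow_natCast (δ + 4) n, ← Real.rpow_add hδ4]
    have : (n : ℝ) + (-((n - j : ℕ) : ℝ)) = (j : ℝ) := by
      have : ((n - j : ℕ) : ℝ) = (n : ℝ) - (j : ℝ) := by
        push_cast [Nat.cast_sub hjn]; ring
      rw [this]; ring
    rw [this, Real.rpow_natCast]
  rw [key, hE, hE, hpow]
  have h3 : (δ + 3 : ℝ) ≠ 0 := by linarith
  have hBn : (9 : ℝ) * (δ + 4) ^ n + 3 * δ > 0 := by positivity
  rw [div_div_div_eq]
  rw [show ((9:ℝ) * (δ + 4) ^ j + 3 * δ) * (δ + 3) = (δ + 3) * (9 * (δ + 4) ^ j + 3 * δ) from by ring]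
  rw [mul_div_mul_left _ _ h3]
end

section
/- Let δ > 0 be a real number. For n ≥ 1 define C_n = (δ+3)/(6(δ+4)^n + 3δ + 3) · ( Σ_{i=1}^{n} 6(δ+4)^{i-1}(δ+1)/(2(δ+2)^{n-i} + δ − 1) + 3(δ+1)/(2(δ+2)^n + δ − 1) ). Then the sequence (C_n) converges as n → ∞, and its limit equals ((δ+1)(δ+3)/(δ+4)) · Σ_{j=0}^{∞} 1/( (δ+4)^j (2(δ+2)^j + δ − 1) ). -/
/-!
Substituting `j = n - i` turns the sum into `6(δ+1)(δ+4)^(n-1)` times the `n`-th partial sum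
of the series, whose terms are dominated by a geometric series of ratio `1/(δ+4)`. The prefactor
`(δ+3)/(6(δ+4)^n + 3δ + 3)` cancels the growth `6(δ+4)^n` up to a factor tending to `1`, and the
contribution of the three initial vertices tends to `0`.
-/

open Filter Finset Topology

lemma sum_Icc_pow_mul_eq_mul_sum_range {K : Type*} [Field K] {x : K} (hx : x ≠ 0)
    (h : ℕ → K) (n : ℕ) :
    ∑ i ∈ Icc 1 n, x ^ (i - 1) * h (n - i) = x ^ n / x * ∑ j ∈ range n, h j / x ^ j := by
  rw [mul_sum]
  refine sum_nbij' (n - ·) (n - ·) ?_ ?_ ?_ ?_ ?_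
  · intro i hi; simp only [mem_Icc, mem_range] at hi ⊢; omega
  · intro j hj; simp only [mem_Icc, mem_range] at hj ⊢; omega
  · intro i hi; simp only [mem_Icc] at hi; omega
  · intro j hj; simp only [mem_range] at hj; omega
  · intro i hi
    have hsplit : x ^ n = x ^ (i - 1) * x ^ (n - i) * x := by
      rw [← pow_add, ← pow_succ]
      simp only [mem_Icc] at hi
      congr 1
      omega
    rw [hsplit]
    field_simp

lemma summable_one_div_pow_mul {a m : ℝ} (ha : 1 < a) (hm : 0 < m) {d : ℕ → ℝ}
    (hd : ∀ j, m ≤ d j) : Summable fun j => 1 / (a ^ j * d j) := by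
  have hgeom : Summable fun j : ℕ => 1 / m * (1 / a) ^ j :=
    (summable_geometric_of_lt_one (by positivity) ((div_lt_one (by linarith)).2 ha)).mul_left _
  refine hgeom.of_nonneg_of_le (fun j => ?_) (fun j => ?_)
  · exact one_div_nonneg.2 (mul_nonneg (pow_nonneg (by linarith) j) (hm.le.trans (hd j)))
  · rw [one_div_pow, div_mul_div_comm, one_mul, mul_comm m]
    exact one_div_le_one_div_of_le (by positivity)
      (mul_le_mul_of_nonneg_left (hd j) (by positivity))

lemma tendsto_div_add_const_of_tendsto_atTop {α : Type*} {l : Filter α} {u : α → ℝ}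
    (hu : Tendsto u l atTop) (c : ℝ) : Tendsto (fun n => u n / (u n + c)) l (𝓝 1) := by
  have huc : Tendsto (fun n => u n + c) l atTop := tendsto_atTop_add_const_right _ c hu
  have hsub : Tendsto (fun n => 1 - c / (u n + c)) l (𝓝 1) := by
    simpa using tendsto_const_nhds.sub (tendsto_const_nhds.div_atTop huc)
  refine hsub.congr' ((huc.eventually_gt_atTop 0).mono fun n hn => ?_)
  field_simp
  ring

lemma sum_Icc_clustering_eq {δ : ℝ} (hδ : δ + 4 ≠ 0) (n : ℕ) :
    ∑ i ∈ Icc 1 n, 6 * (δ + 4) ^ (i - 1) * (δ + 1) / (2 * (δ + 2) ^ (n - i) + δ - 1)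
      = 6 * (δ + 1) * (δ + 4) ^ n / (δ + 4) *
          ∑ j ∈ range n, 1 / ((δ + 4) ^ j * (2 * (δ + 2) ^ j + δ - 1)) := by
  have hregroup : ∑ i ∈ Icc 1 n,
      6 * (δ + 4) ^ (i - 1) * (δ + 1) / (2 * (δ + 2) ^ (n - i) + δ - 1)
      = ∑ i ∈ Icc 1 n, (δ + 4) ^ (i - 1) * (6 * (δ + 1) / (2 * (δ + 2) ^ (n - i) + δ - 1)) :=
    sum_congr rfl fun i _ => by ring
  have hfactor : ∑ j ∈ range n, 6 * (δ + 1) / (2 * (δ + 2) ^ j + δ - 1) / (δ + 4) ^ j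
      = 6 * (δ + 1) * ∑ j ∈ range n, 1 / ((δ + 4) ^ j * (2 * (δ + 2) ^ j + δ - 1)) := by
    rw [mul_sum]
    exact sum_congr rfl fun j _ => by rw [div_div, mul_one_div, mul_comm ((δ + 4) ^ j)]
  rw [hregroup, sum_Icc_pow_mul_eq_mul_sum_range hδ
    (fun j => 6 * (δ + 1) / (2 * (δ + 2) ^ j + δ - 1)), hfactor]
  ring

/-- The average clustering coefficient of the weighted network converges. -/
theorem stmt7 (δ : ℝ) (hδ : 0 < δ) :
    Filter.Tendsto
      (fun n : ℕ =>
        (δ + 3) / (6 * (δ + 4) ^ n + 3 * δ + 3) *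
          ((∑ i ∈ Finset.Icc 1 n,
              6 * (δ + 4) ^ (i - 1) * (δ + 1) / (2 * (δ + 2) ^ (n - i) + δ - 1)) +
            3 * (δ + 1) / (2 * (δ + 2) ^ n + δ - 1)))
      Filter.atTop
      (nhds ((δ + 1) * (δ + 3) / (δ + 4) *
        ∑' j : ℕ, 1 / ((δ + 4) ^ j * (2 * (δ + 2) ^ j + δ - 1)))) := by
  set g : ℕ → ℝ := fun j => 1 / ((δ + 4) ^ j * (2 * (δ + 2) ^ j + δ - 1))
  have hden : ∀ j : ℕ, δ + 1 ≤ 2 * (δ + 2) ^ j + δ - 1 := fun j => by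
    nlinarith [one_le_pow₀ (M₀ := ℝ) (a := δ + 2) (n := j) (by linarith)]
  have hpow4 : Tendsto (fun n : ℕ => 6 * (δ + 4) ^ n) atTop atTop :=
    (tendsto_pow_atTop_atTop_of_one_lt (by linarith)).const_mul_atTop (by norm_num)
  have hpow2 : Tendsto (fun n : ℕ => 2 * (δ + 2) ^ n + δ - 1) atTop atTop :=
    tendsto_atTop_add_const_right _ _ <| tendsto_atTop_add_const_right _ _ <|
      (tendsto_pow_atTop_atTop_of_one_lt (by linarith)).const_mul_atTop (by norm_num)
  have hratio : Tendsto (fun n : ℕ => 6 * (δ + 4) ^ n / (6 * (δ + 4) ^ n + 3 * δ + 3))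
      atTop (𝓝 1) := by
    simpa only [add_assoc] using tendsto_div_add_const_of_tendsto_atTop hpow4 (3 * δ + 3)
  have hinitial : Tendsto (fun n : ℕ => (δ + 3) / (6 * (δ + 4) ^ n + 3 * δ + 3) *
      (3 * (δ + 1) / (2 * (δ + 2) ^ n + δ - 1))) atTop (𝓝 0) := by
    simpa using (tendsto_const_nhds.div_atTop (tendsto_atTop_add_const_right _ _ <|
      tendsto_atTop_add_const_right _ _ hpow4)).mul (tendsto_const_nhds.div_atTop hpow2)
  have hpartial : Tendsto (fun n => ∑ j ∈ range n, g j) atTop (𝓝 (∑' j, g j)) :=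
    (summable_one_div_pow_mul (by linarith) (by linarith) hden).hasSum.tendsto_sum_nat
  convert ((tendsto_const_nhds (x := (δ + 1) * (δ + 3) / (δ + 4))).mul hratio |>.mul
    hpartial).add hinitial using 2
  · rw [sum_Icc_clustering_eq (by linarith)]
    ring
  · simp
end

section
/- Let δ > 0 be a real number and let 1 ≤ n_i ≤ n be integers. Define n_v(0) = 3, n_v(u) = 6(δ+4)^{u-1} for u ≥ 1, s(u,m) = 2(δ+2)^{m-u}, and k(u,m) = (2(δ+2)^{m-u} + 2δ)/(δ+1). Then ( Σ_{u=0}^{n_i−1} n_v(u)·s(u,n_i−1)·k(u,n) + Σ_{u=n_i+1}^{n} n_v(n_i)·s(n_i,u−1)·k(u,n) ) / ( n_v(n_i)·k(n_i,n) ) + 1 = [ (δ+1)(δ+2)^{n+n_i}(δ+4)^{1−n_i} − 2(δ+2)^{1+n−n_i} + δ²(δ+3) ] / [ δ(δ+3)((δ+2)^{n−n_i} + δ) ] + (δ−1)/(δ+1) + 2(2+δ+n−n_i) / (2+δ+δ(2+δ)^{1+n_i−n}). -/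
/-!
Write `n_i = p + 1` and `n = p + 1 + q`. The neighbours of a vertex born at iteration `n_i`
are the older vertices `u < n_i` and the younger ones `u > n_i`. After reindexing, both sums
are combinations of the geometric sums `∑_{i<m} x^i y^(m-1-i)` with
`(x, y) ∈ {(δ+4, (δ+2)^2), (δ+4, δ+2), (δ+2, δ+2), (δ+2, 1)}`, so they have closed forms, and the
claimed identity becomes an identity of rational functions in `δ`, `q`, `(δ+4)^p`, `(δ+2)^p` and
`(δ+2)^q`.
-/

open Finset

namespace WeightedNetwork

def numVertices (δ : ℝ) : ℕ → ℝ
  | 0 => 3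
  | u + 1 => 6 * (δ + 4) ^ u

def strength (δ : ℝ) (u m : ℕ) : ℝ := 2 * (δ + 2) ^ (m - u)

noncomputable def degree (δ : ℝ) (u m : ℕ) : ℝ := (2 * (δ + 2) ^ (m - u) + 2 * δ) / (δ + 1)

variable {δ : ℝ}

theorem eq_numVertices {nv : ℕ → ℝ} (h0 : nv 0 = 3)
    (h : ∀ u : ℕ, 1 ≤ u → nv u = 6 * (δ + 4) ^ (u - 1)) : nv = numVertices δ := by
  funext u
  cases u with
  | zero => exact h0
  | succ u => exact h (u + 1) u.succ_pos

theorem sum_range_numVertices_mul_strength_mul_degree (h : δ + 4 ≠ (δ + 2) ^ 2) (p q : ℕ) :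
    ∑ u ∈ range (p + 1), numVertices δ u * strength δ u p * degree δ u (p + 1 + q) =
      (6 * (δ + 2) ^ p * (2 * (δ + 2) ^ (p + 1 + q) + 2 * δ) +
        24 * ((δ + 2) ^ (q + 1) * (((δ + 4) ^ p - (δ + 2) ^ (2 * p)) / (δ + 4 - (δ + 2) ^ 2)) +
          δ * (((δ + 4) ^ p - (δ + 2) ^ p) / 2))) / (δ + 1) := by
  have term : ∀ i ∈ range p,
      numVertices δ (i + 1) * strength δ (i + 1) p * degree δ (i + 1) (p + 1 + q) =
        24 / (δ + 1) * ((δ + 2) ^ (q + 1) * ((δ + 4) ^ i * ((δ + 2) ^ 2) ^ (p - 1 - i)) +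
          δ * ((δ + 4) ^ i * (δ + 2) ^ (p - 1 - i))) := by
    intro i hi
    have hip : i < p := mem_range.mp hi
    rw [numVertices, strength, degree, show p - (i + 1) = p - 1 - i by omega,
      show p + 1 + q - (i + 1) = (q + 1) + (p - 1 - i) by omega, pow_add, ← pow_mul]
    ring
  rw [sum_range_succ', sum_congr rfl term, ← mul_sum, sum_add_distrib, ← mul_sum, ← mul_sum,
    (Commute.all _ _).geom_sum₂ h, (Commute.all _ _).geom_sum₂ (by linarith)]
  simp only [numVertices, strength, degree, Nat.sub_zero, ← pow_mul]
  ring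

theorem sum_Icc_numVertices_mul_strength_mul_degree (h₁ : δ + 1 ≠ 0) (h₂ : δ + 2 ≠ 0)
    (p q : ℕ) :
    ∑ u ∈ Icc (p + 1 + 1) (p + 1 + q),
        numVertices δ (p + 1) * strength δ (p + 1) (u - 1) * degree δ u (p + 1 + q) =
      24 * (δ + 4) ^ p * (q * (δ + 2) ^ q / (δ + 2) + δ * (((δ + 2) ^ q - 1) / (δ + 1))) /
        (δ + 1) := by
  have term : ∀ j ∈ range q,
      numVertices δ (p + 1) * strength δ (p + 1) (p + 1 + 1 + j - 1) *
          degree δ (p + 1 + 1 + j) (p + 1 + q) =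
        24 * (δ + 4) ^ p / (δ + 1) * ((δ + 2) ^ j * (δ + 2) ^ (q - 1 - j) + δ * (δ + 2) ^ j) := by
    intro j hj
    have hjq : j < q := mem_range.mp hj
    rw [numVertices, strength, degree, show p + 1 + 1 + j - 1 - (p + 1) = j by omega,
      show p + 1 + q - (p + 1 + 1 + j) = q - 1 - j by omega]
    ring
  have pred_pow : (q : ℝ) * (δ + 2) ^ (q - 1) = q * (δ + 2) ^ q / (δ + 2) := by
    rcases q with _ | q
    · simp
    · rw [Nat.add_sub_cancel, pow_succ, mul_div_assoc, mul_div_cancel_right₀ _ h₂]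
  rw [← Ico_add_one_right_eq_Icc, sum_Ico_eq_sum_range,
    show p + 1 + q + 1 - (p + 1 + 1) = q by omega, sum_congr rfl term, ← mul_sum,
    sum_add_distrib, ← mul_sum, geom_sum₂_self,
    geom_sum_eq (by contrapose! h₁; linarith), pred_pow, show δ + 2 - 1 = δ + 1 by ring]
  ring

end WeightedNetwork

open WeightedNetwork in
/-- Average nearest-neighbor degree of vertices created at iteration `ni`. -/
theorem stmt8 (δ : ℝ) (hδ : 0 < δ) (ni n : ℕ) (h1 : 1 ≤ ni) (h2 : ni ≤ n)
    (nv : ℕ → ℝ) (hnv0 : nv 0 = 3)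
    (hnv : ∀ u : ℕ, 1 ≤ u → nv u = 6 * (δ + 4) ^ (u - 1))
    (s k : ℕ → ℕ → ℝ)
    (hs : ∀ u m : ℕ, u ≤ m → s u m = 2 * (δ + 2) ^ (m - u))
    (hk : ∀ u m : ℕ, u ≤ m → k u m = (2 * (δ + 2) ^ (m - u) + 2 * δ) / (δ + 1)) :
    ((∑ u ∈ Finset.range ni, nv u * s u (ni - 1) * k u n) +
        ∑ u ∈ Finset.Icc (ni + 1) n, nv ni * s ni (u - 1) * k u n) /
      (nv ni * k ni n) + 1 =
    ((δ + 1) * (δ + 2) ^ (n + ni) * (δ + 4) ^ (1 - (ni : ℤ)) -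
        2 * (δ + 2) ^ (1 + n - ni) + δ ^ 2 * (δ + 3)) /
      (δ * (δ + 3) * ((δ + 2) ^ (n - ni) + δ)) +
    (δ - 1) / (δ + 1) +
    2 * (2 + δ + (n : ℝ) - (ni : ℝ)) / (2 + δ + δ * (2 + δ) ^ (1 + (ni : ℤ) - (n : ℤ))) := by
  obtain ⟨p, rfl⟩ : ∃ p, ni = p + 1 := ⟨ni - 1, by omega⟩
  obtain ⟨q, rfl⟩ : ∃ q, n = p + 1 + q := ⟨n - (p + 1), by omega⟩
  have hs' : ∀ u m : ℕ, u ≤ m → s u m = strength δ u m := hs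
  have hk' : ∀ u m : ℕ, u ≤ m → k u m = degree δ u m := hk
  obtain rfl := eq_numVertices hnv0 hnv
  have older : ∑ u ∈ range (p + 1), numVertices δ u * s u (p + 1 - 1) * k u (p + 1 + q) =
      ∑ u ∈ range (p + 1), numVertices δ u * strength δ u p * degree δ u (p + 1 + q) :=
    sum_congr rfl fun u hu => by
      have := mem_range.mp hu
      rw [Nat.add_sub_cancel, hs' u p (by omega), hk' u _ (by omega)]
  have younger : ∑ u ∈ Icc (p + 1 + 1) (p + 1 + q),
        numVertices δ (p + 1) * s (p + 1) (u - 1) * k u (p + 1 + q) =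
      ∑ u ∈ Icc (p + 1 + 1) (p + 1 + q),
        numVertices δ (p + 1) * strength δ (p + 1) (u - 1) * degree δ u (p + 1 + q) :=
    sum_congr rfl fun u hu => by
      have := mem_Icc.mp hu
      rw [hs' _ _ (by omega), hk' u _ (by omega)]
  rw [older, younger, sum_range_numVertices_mul_strength_mul_degree (by nlinarith),
    sum_Icc_numVertices_mul_strength_mul_degree (by positivity) (by positivity),
    hk' _ _ (by omega), numVertices, degree,
    show 1 + (p + 1 + q) - (p + 1) = q + 1 by omega, show p + 1 + q - (p + 1) = q by omega,
    show (1 : ℤ) - (p + 1 : ℕ) = -p by push_cast; ring,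
    show (1 : ℤ) + (p + 1 : ℕ) - (p + 1 + q : ℕ) = 1 - q by push_cast; ring,
    zpow_neg, zpow_sub₀ (by positivity), zpow_one, zpow_natCast, zpow_natCast,
    show δ + 4 - (δ + 2) ^ 2 = -(δ * (δ + 3)) by ring]
  push_cast
  field_simp
  ring
end

section
/- Let δ > 0 be a real number and let 1 ≤ n_i ≤ n be integers. Define n_v(0) = 3, n_v(u) = 6(δ+4)^{u-1} for u ≥ 1, s(u,m) = 2(δ+2)^{m-u}, and k(u,m) = (2(δ+2)^{m-u} + 2δ)/(δ+1). Then ( Σ_{u=0}^{n_i−1} n_v(u)·s(u,n_i−1)·k(u,n)·(1+δ)^{n−n_i} + n_v(n_i)·k(n_i,n)·(1+δ)^{n−n_i} + Σ_{u=n_i+1}^{n} n_v(n_i)·s(n_i,u−1)·k(u,n)·(1+δ)^{n−u} ) / ( n_v(n_i)·s(n_i,n) ) = 2[(δ+1)^{n−n_i−1} + δ² + δ − 1]/(δ(δ+2)) − 2(δ+2)(δ+1)^{n−n_i−1}/(δ(δ+3)) + (δ+1)^{n−n_i−1} + (δ+1)^{n−n_i}(δ+2)^{2n_i}(δ+4)^{1−n_i}/(δ(δ+3)).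 -/
/-!
Write `ni = m + 1` and `n = m + 1 + d`. After inserting the closed forms of `nv`, `s` and `k`,
the sum over the older vertices `u ≥ 1` splits into the two geometric sums
`∑ (δ+4)^t ((δ+2)^2)^(m-1-t)` and `∑ (δ+4)^t (δ+2)^(m-1-t)`, and the sum over the younger vertices
into `∑ (δ+2)^j ((δ+1)(δ+2))^(d-1-j)` and `∑ (δ+2)^j (δ+1)^(d-1-j)`. Summing them with
`(x - y) ∑ x^i y^(N-1-i) = x^N - y^N` leaves an identity of rational functions in `δ` and the powers
`(δ+1)^d`, `(δ+2)^d`, `(δ+2)^m`, `(δ+4)^m`.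
-/

open Finset

section
variable {δ : ℝ} {nv : ℕ → ℝ} {s k : ℕ → ℕ → ℝ}

lemma sum_range_nv_mul_s_mul_k (hδ : 0 < δ)
    (hnv : ∀ u : ℕ, 1 ≤ u → nv u = 6 * (δ + 4) ^ (u - 1))
    (hs : ∀ u m : ℕ, u ≤ m → s u m = 2 * (δ + 2) ^ (m - u))
    (hk : ∀ u m : ℕ, u ≤ m → k u m = (2 * (δ + 2) ^ (m - u) + 2 * δ) / (δ + 1)) (m d : ℕ) :
    ∑ t ∈ range m, nv (t + 1) * s (t + 1) m * k (t + 1) (m + 1 + d) =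
      24 / (δ + 1) * ((δ + 2) ^ (d + 1) * ((δ + 2) ^ (2 * m) - (δ + 4) ^ m) / (δ * (δ + 3)) +
        δ * ((δ + 4) ^ m - (δ + 2) ^ m) / 2) := by
  have hterm : ∀ t ∈ range m, nv (t + 1) * s (t + 1) m * k (t + 1) (m + 1 + d) =
      24 / (δ + 1) * ((δ + 2) ^ (d + 1) * ((δ + 4) ^ t * ((δ + 2) ^ 2) ^ (m - 1 - t)) +
        δ * ((δ + 4) ^ t * (δ + 2) ^ (m - 1 - t))) := by
    intro t ht
    obtain ⟨r, rfl⟩ : ∃ r, m = t + 1 + r := ⟨_, (Nat.add_sub_of_le (mem_range.mp ht)).symm⟩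
    rw [hnv _ (by omega), hs _ _ (by omega), hk _ _ (by omega),
      show t + 1 + r - 1 - t = r by omega, show t + 1 + r - (t + 1) = r by omega,
      show t + 1 + r + 1 + d - (t + 1) = r + (d + 1) by omega, Nat.add_sub_cancel, ← pow_mul]
    ring
  have hne : δ + 4 ≠ (δ + 2) ^ 2 := by nlinarith
  rw [sum_congr rfl hterm, ← mul_sum, sum_add_distrib, ← mul_sum, ← mul_sum,
    (Commute.all _ _).geom_sum₂ hne, (Commute.all _ _).geom_sum₂ (by linarith), pow_mul]
  have : δ * (δ + 3) ≠ 0 := by positivity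
  field_simp
  ring

lemma sum_Icc_nv_mul_s_mul_k (hδ : 0 < δ)
    (hnv : ∀ u : ℕ, 1 ≤ u → nv u = 6 * (δ + 4) ^ (u - 1))
    (hs : ∀ u m : ℕ, u ≤ m → s u m = 2 * (δ + 2) ^ (m - u))
    (hk : ∀ u m : ℕ, u ≤ m → k u m = (2 * (δ + 2) ^ (m - u) + 2 * δ) / (δ + 1)) (m d : ℕ) :
    ∑ u ∈ Icc (m + 1 + 1) (m + 1 + d),
        nv (m + 1) * s (m + 1) (u - 1) * k u (m + 1 + d) * (1 + δ) ^ (m + 1 + d - u) =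
      24 * (δ + 4) ^ m / (δ + 1) * ((δ + 2) ^ d * ((δ + 1) ^ d - 1) / (δ * (δ + 2)) +
        δ * ((δ + 2) ^ d - (δ + 1) ^ d)) := by
  have hterm : ∀ j ∈ range d,
      nv (m + 1) * s (m + 1) (m + 1 + 1 + j - 1) * k (m + 1 + 1 + j) (m + 1 + d) *
        (1 + δ) ^ (m + 1 + d - (m + 1 + 1 + j)) =
      24 * (δ + 4) ^ m / (δ + 1) * ((δ + 2) ^ j * ((δ + 1) * (δ + 2)) ^ (d - 1 - j) +
        δ * ((δ + 2) ^ j * (δ + 1) ^ (d - 1 - j))) := by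
    intro j hj
    obtain ⟨r, rfl⟩ : ∃ r, d = j + 1 + r := ⟨_, (Nat.add_sub_of_le (mem_range.mp hj)).symm⟩
    rw [hnv _ le_add_self, Nat.add_sub_cancel, hs _ _ (by omega), hk _ _ (by omega),
      show m + 1 + 1 + j - 1 - (m + 1) = j by omega,
      show m + 1 + (j + 1 + r) - (m + 1 + 1 + j) = r by omega,
      show j + 1 + r - 1 - j = r by omega, mul_pow]
    ring
  rw [← Ico_add_one_right_eq_Icc, sum_Ico_eq_sum_range,
    show m + 1 + d + 1 - (m + 1 + 1) = d by omega, sum_congr rfl hterm, ← mul_sum,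
    sum_add_distrib, ← mul_sum, (Commute.all _ _).geom_sum₂ (by nlinarith),
    (Commute.all _ _).geom_sum₂ (by linarith), mul_pow,
    show δ + 2 - (δ + 1) * (δ + 2) = -(δ * (δ + 2)) by ring]
  have := hδ.ne'
  field_simp
  ring

end

/-- Weighted average nearest-neighbor degree of vertices created at iteration `ni`. -/
theorem stmt9 (δ : ℝ) (hδ : 0 < δ) (ni n : ℕ) (h1 : 1 ≤ ni) (h2 : ni ≤ n)
    (nv : ℕ → ℝ) (hnv0 : nv 0 = 3)
    (hnv : ∀ u : ℕ, 1 ≤ u → nv u = 6 * (δ + 4) ^ (u - 1))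
    (s k : ℕ → ℕ → ℝ)
    (hs : ∀ u m : ℕ, u ≤ m → s u m = 2 * (δ + 2) ^ (m - u))
    (hk : ∀ u m : ℕ, u ≤ m → k u m = (2 * (δ + 2) ^ (m - u) + 2 * δ) / (δ + 1)) :
    ((∑ u ∈ Finset.range ni, nv u * s u (ni - 1) * k u n * (1 + δ) ^ (n - ni)) +
        nv ni * k ni n * (1 + δ) ^ (n - ni) +
        ∑ u ∈ Finset.Icc (ni + 1) n, nv ni * s ni (u - 1) * k u n * (1 + δ) ^ (n - u)) /
      (nv ni * s ni n) =
    2 * ((δ + 1) ^ ((n : ℤ) - (ni : ℤ) - 1) + δ ^ 2 + δ - 1) / (δ * (δ + 2)) -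
      2 * (δ + 2) * (δ + 1) ^ ((n : ℤ) - (ni : ℤ) - 1) / (δ * (δ + 3)) +
      (δ + 1) ^ ((n : ℤ) - (ni : ℤ) - 1) +
      (δ + 1) ^ (n - ni) * (δ + 2) ^ (2 * ni) * (δ + 4) ^ (1 - (ni : ℤ)) /
        (δ * (δ + 3)) := by
  obtain ⟨m, rfl⟩ : ∃ m, ni = m + 1 := ⟨ni - 1, by omega⟩
  obtain ⟨d, rfl⟩ : ∃ d, n = m + 1 + d := ⟨n - (m + 1), by omega⟩
  simp only [Nat.add_sub_cancel, Nat.add_sub_cancel_left]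
  rw [← sum_mul, sum_range_succ', sum_range_nv_mul_s_mul_k hδ hnv hs hk,
    sum_Icc_nv_mul_s_mul_k hδ hnv hs hk, hnv0, hnv _ le_add_self, hs 0 _ (Nat.zero_le m),
    hs _ _ le_self_add, hk 0 _ (Nat.zero_le _), hk _ _ le_self_add,
    show ((m + 1 + d : ℕ) : ℤ) - ((m + 1 : ℕ) : ℤ) - 1 = (d : ℤ) - 1 by push_cast; ring,
    show (1 : ℤ) - ((m + 1 : ℕ) : ℤ) = -(m : ℤ) by push_cast; ring,
    zpow_sub₀ (by positivity), zpow_neg, zpow_natCast, zpow_natCast, zpow_one]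
  simp only [Nat.add_sub_cancel, Nat.add_sub_cancel_left, Nat.sub_zero]
  have := hδ.ne'
  field_simp
  ring
end

section
/- Let δ > 0 be a real number. Define the sequence H_n by H_0 = 4/3 and H_n = ((δ+4)/(δ+1))·H_{n−1} + 8(δ+4)^{n−1} − 4/(δ+4) for n ≥ 1. Then for all n ≥ 0, H_n = [4δ(δ+1)^{n+1} + 24(δ+4)^n(δ+1)^{n+1} − 12(δ+2)(δ+4)^n] / (3δ(δ+4)(δ+1)^n). -/
/-- Closed form of the mean hitting time of random walks on the weighted
network. -/
theorem stmt15 (δ : ℝ) (hδ : 0 < δ) (H : ℕ → ℝ)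
    (hH0 : H 0 = 4 / 3)
    (hH : ∀ n : ℕ, H (n + 1) = (δ + 4) / (δ + 1) * H n + 8 * (δ + 4) ^ n - 4 / (δ + 4)) :
    ∀ n : ℕ,
      H n = (4 * δ * (δ + 1) ^ (n + 1) + 24 * (δ + 4) ^ n * (δ + 1) ^ (n + 1) -
          12 * (δ + 2) * (δ + 4) ^ n) /
        (3 * δ * (δ + 4) * (δ + 1) ^ n) := by
  have h1 : (δ + 1) ≠ 0 := by positivity
  have h4 : (δ + 4) ≠ 0 := by positivity
  have hδ0 : δ ≠ 0 := ne_of_gt hδ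
  intro n
  induction n with
  | zero =>
    rw [hH0]
    field_simp
    ring
  | succ n ih =>
    rw [hH n, ih]
    have hp1 : (δ + 1) ^ n ≠ 0 := pow_ne_zero _ h1
    field_simp
    ring
end

section
/- Let δ > 0 be a real number. Define H_n = [4δ(δ+1)^{n+1} + 24(δ+4)^n(δ+1)^{n+1} − 12(δ+2)(δ+4)^n] / (3δ(δ+4)(δ+1)^n) and N_n = (6(δ+4)^n + 3δ + 3)/(δ+3). Then lim_{n→∞} H_n / N_n = 4(δ+1)(δ+3) / (3δ(δ+4)); in particular the mean hitting time grows linearly with the number of vertices. -/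
/-- The mean hitting time grows linearly with the number of vertices. -/
theorem stmt16 (δ : ℝ) (hδ : 0 < δ)
    (H N : ℕ → ℝ)
    (hH : ∀ n : ℕ,
      H n = (4 * δ * (δ + 1) ^ (n + 1) + 24 * (δ + 4) ^ n * (δ + 1) ^ (n + 1) -
          12 * (δ + 2) * (δ + 4) ^ n) /
        (3 * δ * (δ + 4) * (δ + 1) ^ n))
    (hN : ∀ n : ℕ, N n = (6 * (δ + 4) ^ n + 3 * δ + 3) / (δ + 3)) :
    Filter.Tendsto (fun n : ℕ => H n / N n) Filter.atTop
      (nhds (4 * (δ + 1) * (δ + 3) / (3 * δ * (δ + 4)))) := by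
  have h1 : (0:ℝ) < δ + 1 := by linarith
  have h4 : (0:ℝ) < δ + 4 := by linarith
  have h3 : (0:ℝ) < δ + 3 := by linarith
  have ha : |1 / (δ + 4)| < 1 := by
    rw [abs_of_pos (by positivity), div_lt_one h4]; linarith
  have hb : |1 / (δ + 1)| < 1 := by
    rw [abs_of_pos (by positivity), div_lt_one h1]; linarith
  have ta : Filter.Tendsto (fun n : ℕ => (1 / (δ + 4)) ^ n) Filter.atTop (nhds 0) :=
    tendsto_pow_atTop_nhds_zero_of_abs_lt_one ha
  have tb : Filter.Tendsto (fun n : ℕ => (1 / (δ + 1)) ^ n) Filter.atTop (nhds 0) :=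
    tendsto_pow_atTop_nhds_zero_of_abs_lt_one hb
  have num : Filter.Tendsto
      (fun n : ℕ => ((4 * δ * (δ + 1)) * (1 / (δ + 4)) ^ n + 24 * (δ + 1)
        - 12 * (δ + 2) * (1 / (δ + 1)) ^ n) * (δ + 3)) Filter.atTop
      (nhds (((4 * δ * (δ + 1)) * 0 + 24 * (δ + 1) - 12 * (δ + 2) * 0) * (δ + 3))) :=
    (((ta.const_mul _).add tendsto_const_nhds).sub (tb.const_mul _)).mul_const _
  have den : Filter.Tendsto
      (fun n : ℕ => 3 * δ * (δ + 4) * (6 + (3 * δ + 3) * (1 / (δ + 4)) ^ n)) Filter.atTop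
      (nhds (3 * δ * (δ + 4) * (6 + (3 * δ + 3) * 0))) :=
    (tendsto_const_nhds.add (ta.const_mul _)).const_mul _
  have hden0 : 3 * δ * (δ + 4) * (6 + (3 * δ + 3) * 0) ≠ 0 := by
    have : (0:ℝ) < 3 * δ * (δ + 4) * (6 + (3 * δ + 3) * 0) := by nlinarith
    exact ne_of_gt this
  have key := num.div den hden0
  have hval : 4 * (δ + 1) * (δ + 3) / (3 * δ * (δ + 4)) =
      ((4 * δ * (δ + 1)) * 0 + 24 * (δ + 1) - 12 * (δ + 2) * 0) * (δ + 3) /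
        (3 * δ * (δ + 4) * (6 + (3 * δ + 3) * 0)) := by
    field_simp
    ring
  rw [hval]
  refine Filter.Tendsto.congr (fun n => ?_) key
  rw [hH n, hN n]
  have p1 : ((δ + 1) : ℝ) ^ n ≠ 0 := pow_ne_zero _ (ne_of_gt h1)
  have p4 : ((δ + 4) : ℝ) ^ n ≠ 0 := pow_ne_zero _ (ne_of_gt h4)
  have pd : (6 : ℝ) + (3 * δ + 3) * (1 / (δ + 4)) ^ n ≠ 0 := by
    have hp : (0:ℝ) < (1 / (δ + 4)) ^ n := by positivity
    nlinarith
  have hNd : (6 : ℝ) * (δ + 4) ^ n + 3 * δ + 3 ≠ 0 := by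
    have hp : (0:ℝ) < (δ + 4) ^ n := by positivity
    nlinarith
  simp only [Pi.div_apply, div_pow, one_pow]
  field_simp
  ring
end

section
/- Let δ > 0 be a real number. Define the sequence S_n of positive reals by S_0 = 8 and S_n = (δ+2)^{N_{n−1}} · S_{n−1} · 2^{6(δ+4)^{n−1}} for n ≥ 1, where N_{n−1} = (6(δ+4)^{n−1} + 3δ + 3)/(δ+3) and powers are real powers. Then for all n ≥ 0, S_n = 8^{(2(δ+4)^n + δ + 1)/(δ+3)} · (δ+2)^{3(2((δ+4)^n − 1) + (δ+1)(δ+3)n)/(δ+3)²}. -/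
/-- Closed form of the product of vertex strengths in the weighted network. -/
theorem stmt17 (δ : ℝ) (hδ : 0 < δ)
    (S : ℕ → ℝ)
    (hS0 : S 0 = 8)
    (hS : ∀ n : ℕ, S (n + 1) =
      (δ + 2) ^ ((6 * (δ + 4) ^ n + 3 * δ + 3) / (δ + 3)) * S n *
        (2 : ℝ) ^ (6 * (δ + 4) ^ n)) :
    ∀ n : ℕ,
      S n = (8 : ℝ) ^ ((2 * (δ + 4) ^ n + δ + 1) / (δ + 3)) *
        (δ + 2) ^ (3 * (2 * ((δ + 4) ^ n - 1) + (δ + 1) * (δ + 3) * (n : ℝ)) / (δ + 3) ^ 2) := by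
  have h2 : (0:ℝ) < 2 := by norm_num
  have hd2 : (0:ℝ) < δ + 2 := by linarith
  have hd3 : (δ:ℝ) + 3 ≠ 0 := by positivity
  have h8 : (8:ℝ) = (2:ℝ) ^ (3:ℝ) := by
    rw [show (3:ℝ) = ((3:ℕ):ℝ) by norm_num, Real.rpow_natCast]; norm_num
  intro n
  induction n with
  | zero =>
    simp only [pow_zero, Nat.cast_zero, mul_zero, zero_add]
    rw [show (2 * 1 + δ + 1) / (δ + 3) = 1 by field_simp; ring,
      show 3 * (2 * ((1:ℝ) - 1) + 0) / (δ + 3) ^ 2 = 0 by ring,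
      Real.rpow_one, Real.rpow_zero, mul_one, hS0]
  | succ n ih =>
    rw [hS n, ih, h8, ← Real.rpow_mul h2.le, ← Real.rpow_mul h2.le]
    have e2 : 3 * ((2 * (δ + 4) ^ n + δ + 1) / (δ + 3)) + 6 * (δ + 4) ^ n
        = 3 * ((2 * (δ + 4) ^ (n+1) + δ + 1) / (δ + 3)) := by
      field_simp; ring
    have ed : (6 * (δ + 4) ^ n + 3 * δ + 3) / (δ + 3)
        + 3 * (2 * ((δ + 4) ^ n - 1) + (δ + 1) * (δ + 3) * (n : ℝ)) / (δ + 3) ^ 2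
        = 3 * (2 * ((δ + 4) ^ (n+1) - 1) + (δ + 1) * (δ + 3) * ((n:ℕ)+1 : ℝ)) / (δ + 3) ^ 2 := by
      field_simp; ring
    push_cast
    rw [← e2, ← ed, Real.rpow_add h2, Real.rpow_add hd2]
    ring
end
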